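/- arXiv:0711.3636 — 2 statements merged into one kernel-verified Lean document; each statement's English description precedes it below -/
import Mathlib

section
/- If P and A are bounded operators on a Hilbert space H with P positive, and the 2x2 operator matrix [[P, A],[A*, P]] acting on H ⊕ H is positive semidefinite, then ‖A‖ ≤ ‖P‖. -/
/-- The block operator `[[P, A], [A*, P]]` on the Hilbert space `H ⊕₂ H`. -/
noncomputable def blockOp {H : Type*} [NormedAddCommGroup H] [InnerProductSpace ℂ H]
    [CompleteSpace H] (P A : H →L[ℂ] H) : WithLp 2 (H × H) →L[ℂ] WithLp 2 (H × H) :=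
  ((WithLp.prodContinuousLinearEquiv 2 ℂ H H).symm : (H × H) →L[ℂ] WithLp 2 (H × H)).comp
    ((((P.comp (ContinuousLinearMap.fst ℂ H H)) +
        (A.comp (ContinuousLinearMap.snd ℂ H H))).prod
      (((ContinuousLinearMap.adjoint A).comp (ContinuousLinearMap.fst ℂ H H)) +
        (P.comp (ContinuousLinearMap.snd ℂ H H)))).comp
      ((WithLp.prodContinuousLinearEquiv 2 ℂ H H) : WithLp 2 (H × H) →L[ℂ] H × H))

/-!
Evaluating the quadratic form of the positive block operator at `(-x, y)` gives
`2 re ⟪A y, x⟫ ≤ re ⟪P x, x⟫ + re ⟪P y, y⟫ ≤ ‖P‖ (‖x‖² + ‖y‖²)` for all `x, y`.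
Taking `x` a positive multiple of `A y` with `‖x‖ = ‖y‖`, the left side is `2 ‖y‖ ‖A y‖`,
whence `‖A y‖ ≤ ‖P‖ ‖y‖`.
-/

open RCLike ContinuousLinearMap

open scoped InnerProductSpace

namespace ContinuousLinearMap

variable {𝕜 E : Type*} [RCLike 𝕜] [NormedAddCommGroup E] [InnerProductSpace 𝕜 E]

theorem re_inner_apply_self_le_opNorm_mul_sq (T : E →L[𝕜] E) (x : E) :
    re ⟪T x, x⟫_𝕜 ≤ ‖T‖ * ‖x‖ ^ 2 :=
  calc re ⟪T x, x⟫_𝕜 ≤ ‖T x‖ * ‖x‖ := re_inner_le_norm _ _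
    _ ≤ ‖T‖ * ‖x‖ * ‖x‖ := by gcongr; exact T.le_opNorm x
    _ = ‖T‖ * ‖x‖ ^ 2 := by ring

theorem opNorm_le_of_two_re_inner_le {P A : E →L[𝕜] E}
    (h : ∀ x y, 2 * re ⟪A y, x⟫_𝕜 ≤ re ⟪P x, x⟫_𝕜 + re ⟪P y, y⟫_𝕜) : ‖A‖ ≤ ‖P‖ := by
  refine A.opNorm_le_bound (norm_nonneg P) fun y => ?_
  rcases (norm_nonneg (A y)).eq_or_lt with hAy | hAy
  · rw [← hAy]
    positivity
  have hy : 0 < ‖y‖ := norm_pos_iff.mpr fun hy => by simp [hy] at hAy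
  set x : E := ((‖y‖ / ‖A y‖ : ℝ) : 𝕜) • A y
  have hx : ‖x‖ = ‖y‖ := by
    rw [norm_smul, norm_ofReal, abs_of_nonneg (by positivity)]
    field_simp
  have hAyx : re ⟪A y, x⟫_𝕜 = ‖y‖ * ‖A y‖ := by
    rw [inner_smul_right, inner_self_eq_norm_sq_to_K, ← ofReal_pow, ← ofReal_mul, ofReal_re]
    field_simp
  have hbound : 2 * (‖y‖ * ‖A y‖) ≤ 2 * (‖y‖ * (‖P‖ * ‖y‖)) :=
    calc 2 * (‖y‖ * ‖A y‖) = 2 * re ⟪A y, x⟫_𝕜 := by rw [hAyx]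
      _ ≤ re ⟪P x, x⟫_𝕜 + re ⟪P y, y⟫_𝕜 := h x y
      _ ≤ ‖P‖ * ‖x‖ ^ 2 + ‖P‖ * ‖y‖ ^ 2 :=
        add_le_add (P.re_inner_apply_self_le_opNorm_mul_sq x)
          (P.re_inner_apply_self_le_opNorm_mul_sq y)
      _ = 2 * (‖y‖ * (‖P‖ * ‖y‖)) := by rw [hx]; ring
  exact le_of_mul_le_mul_left (le_of_mul_le_mul_left hbound two_pos) hy

end ContinuousLinearMap

theorem re_inner_blockOp_toLp {H : Type*} [NormedAddCommGroup H] [InnerProductSpace ℂ H]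
    [CompleteSpace H] (P A : H →L[ℂ] H) (x y : H) :
    re ⟪blockOp P A (WithLp.toLp 2 (x, y)), WithLp.toLp 2 (x, y)⟫_ℂ =
      re ⟪P x, x⟫_ℂ + re ⟪P y, y⟫_ℂ + 2 * re ⟪A y, x⟫_ℂ := by
  have hadj : re ⟪adjoint A x, y⟫_ℂ = re ⟪A y, x⟫_ℂ := by
    rw [adjoint_inner_left, ← inner_conj_symm, conj_re]
  simp only [blockOp, comp_apply, ContinuousLinearEquiv.coe_coe,
    WithLp.prodContinuousLinearEquiv_apply, prod_apply, add_apply, coe_fst', coe_snd',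
    WithLp.prodContinuousLinearEquiv_symm_apply, WithLp.prod_inner_apply, inner_add_left, map_add,
    hadj]
  ring

theorem norm_le_of_blockOp_positive_general {H : Type*} [NormedAddCommGroup H]
    [InnerProductSpace ℂ H] [CompleteSpace H] (P A : H →L[ℂ] H)
    (hblock : (blockOp P A).IsPositive) : ‖A‖ ≤ ‖P‖ := by
  refine opNorm_le_of_two_re_inner_le fun x y => ?_
  have h := hblock.re_inner_nonneg_left (WithLp.toLp 2 (-x, y))
  rw [re_inner_blockOp_toLp] at h
  simp only [map_neg, inner_neg_left, inner_neg_right, neg_neg] at h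
  linarith

theorem norm_le_of_blockOp_positive {H : Type*} [NormedAddCommGroup H]
    [InnerProductSpace ℂ H] [CompleteSpace H] (P A : H →L[ℂ] H)
    (hP : P.IsPositive) (hblock : (blockOp P A).IsPositive) : ‖A‖ ≤ ‖P‖ :=
  norm_le_of_blockOp_positive_general P A hblock
end

section
/- (Smith's stabilization) For any linear map φ : M_n → M_k, the completely bounded norm of φ equals ‖id_k ⊗ φ‖; that is, sup_m ‖id_m ⊗ φ‖ is attained at m = k. -/
/-!
Write vectors `x, y ∈ ℂᵐ ⊗ ℂᵏ` as `m × k` matrices and factor them, as in the polar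
decomposition, as `x = V B` and `y = W G` with contractions `V, W : ℂᵏ → ℂᵐ` and `k × k`
matrices `B, G` of the same Frobenius norms as `x, y`. Since `id ⊗ φ` commutes with the scalar
matrices `V ⊗ 1`, `⟪y, (id_m ⊗ φ)(X) x⟫ = ⟪G, (id_k ⊗ φ)((W ⊗ 1)ᴴ X (V ⊗ 1)) B⟫`, and the
compression `(W ⊗ 1)ᴴ X (V ⊗ 1)` has norm at most `‖X‖`. Hence `‖id_m ⊗ φ‖ ≤ ‖id_k ⊗ φ‖` for
every `m`.
-/

open scoped ComplexOrder

/-- The amplification `id_m ⊗ φ` of a linear map on matrices. -/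
noncomputable def ampl {n k : ℕ} (m : ℕ)
    (φ : Matrix (Fin n) (Fin n) ℂ →ₗ[ℂ] Matrix (Fin k) (Fin k) ℂ) :
    Matrix (Fin m × Fin n) (Fin m × Fin n) ℂ →ₗ[ℂ]
      Matrix (Fin m × Fin k) (Fin m × Fin k) ℂ where
  toFun M := Matrix.of fun p q => φ (Matrix.of fun a b => M (p.1, a) (q.1, b)) p.2 q.2
  map_add' M N := by
    ext p q
    show φ (Matrix.of fun a b => (M + N) (p.1, a) (q.1, b)) p.2 q.2
        = φ (Matrix.of fun a b => M (p.1, a) (q.1, b)) p.2 q.2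
          + φ (Matrix.of fun a b => N (p.1, a) (q.1, b)) p.2 q.2
    rw [show (Matrix.of fun a b => (M + N) (p.1, a) (q.1, b))
        = (Matrix.of fun a b => M (p.1, a) (q.1, b))
          + (Matrix.of fun a b => N (p.1, a) (q.1, b)) from rfl, map_add]
    simp
  map_smul' c M := by
    ext p q
    show φ (Matrix.of fun a b => (c • M) (p.1, a) (q.1, b)) p.2 q.2
        = c • φ (Matrix.of fun a b => M (p.1, a) (q.1, b)) p.2 q.2
    rw [show (Matrix.of fun a b => (c • M) (p.1, a) (q.1, b))
        = c • (Matrix.of fun a b => M (p.1, a) (q.1, b)) from rfl, map_smul]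
    simp

/-- Operator (spectral) norm of a square complex matrix. -/
noncomputable def opN {n : Type*} [Fintype n] [DecidableEq n] (X : Matrix n n ℂ) : ℝ :=
  ‖(Matrix.toEuclideanCLM (𝕜 := ℂ) X : EuclideanSpace ℂ n →L[ℂ] EuclideanSpace ℂ n)‖

/-- Induced norm (w.r.t. operator norms) of a linear map between matrix algebras. -/
noncomputable def mapNorm {a b : Type*} [Fintype a] [DecidableEq a] [Fintype b] [DecidableEq b]
    (ψ : Matrix a a ℂ →ₗ[ℂ] Matrix b b ℂ) : ℝ :=
  sSup {r : ℝ | ∃ X : Matrix a a ℂ, opN X ≤ 1 ∧ r = opN (ψ X)}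

/-- The completely bounded norm `sup_m ‖id_m ⊗ φ‖`. -/
noncomputable def cbNorm {n k : ℕ}
    (φ : Matrix (Fin n) (Fin n) ℂ →ₗ[ℂ] Matrix (Fin k) (Fin k) ℂ) : ℝ :=
  ⨆ m : ℕ, mapNorm (ampl (m + 1) φ)

/-- Trace norm of a matrix: the trace of `√(XᴴX)`. -/
noncomputable def traceNorm {a b : Type*} [Fintype a] [Fintype b] [DecidableEq b]
    (X : Matrix a b ℂ) : ℝ :=
  (((((Matrix.posSemidef_conjTranspose_mul_self X).1.eigenvectorUnitary : Matrix b b ℂ) *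
    Matrix.diagonal (((↑) : ℝ → ℂ) ∘ (√·) ∘ (Matrix.posSemidef_conjTranspose_mul_self X).1.eigenvalues) *
    (star (Matrix.posSemidef_conjTranspose_mul_self X).1.eigenvectorUnitary : Matrix b b ℂ))).trace).re

/-- Induced trace-norm of a linear map between matrix algebras. -/
noncomputable def tMapNorm {a b : Type*} [Fintype a] [DecidableEq a] [Fintype b] [DecidableEq b]
    (ψ : Matrix a a ℂ →ₗ[ℂ] Matrix b b ℂ) : ℝ :=
  sSup {r : ℝ | ∃ X : Matrix a a ℂ, traceNorm X ≤ 1 ∧ r = traceNorm (ψ X)}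

open scoped Matrix.Norms.L2Operator Kronecker
open Matrix WithLp

section MapNorm

variable {a b : Type*} [Fintype a] [DecidableEq a] [Fintype b] [DecidableEq b]

lemma mapNorm_eq_norm_toContinuousLinearMap (ψ : Matrix a a ℂ →ₗ[ℂ] Matrix b b ℂ) :
    mapNorm ψ = ‖LinearMap.toContinuousLinearMap ψ‖ := by
  rw [← ContinuousLinearMap.sSup_unitClosedBall_eq_norm, mapNorm]
  congr 1
  ext r
  simp [eq_comm, opN, cstar_norm_def]

lemma mapNorm_nonneg (ψ : Matrix a a ℂ →ₗ[ℂ] Matrix b b ℂ) : 0 ≤ mapNorm ψ := by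
  rw [mapNorm_eq_norm_toContinuousLinearMap]
  exact norm_nonneg _

lemma mapNorm_of_isEmpty [IsEmpty a] (ψ : Matrix a a ℂ →ₗ[ℂ] Matrix b b ℂ) : mapNorm ψ = 0 := by
  rw [mapNorm_eq_norm_toContinuousLinearMap]
  exact ContinuousLinearMap.opNorm_subsingleton _

end MapNorm

namespace Matrix

section L2OpNorm

variable {l m n : Type*} [Fintype l] [Fintype m] [Fintype n] [DecidableEq n]

lemma norm_star_dotProduct_mulVec_le (T : Matrix m n ℂ) (x : n → ℂ) (y : m → ℂ) :
    ‖star y ⬝ᵥ T *ᵥ x‖ ≤ ‖T‖ * ‖toLp 2 y‖ * ‖toLp 2 x‖ := by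
  rw [dotProduct_comm, mul_assoc, mul_left_comm]
  calc ‖T *ᵥ x ⬝ᵥ star y‖ = ‖inner ℂ (toLp 2 y) (toLp 2 (T *ᵥ x))‖ := rfl
    _ ≤ ‖toLp 2 y‖ * ‖toLp 2 (T *ᵥ x)‖ := norm_inner_le_norm _ _
    _ ≤ ‖toLp 2 y‖ * (‖T‖ * ‖toLp 2 x‖) := by
        gcongr
        exact l2_opNorm_mulVec T (toLp 2 x)

lemma l2_opNorm_le_of_norm_star_dotProduct_mulVec_le {T : Matrix m n ℂ} {c : ℝ}
    (hc : 0 ≤ c) (h : ∀ x y, ‖star y ⬝ᵥ T *ᵥ x‖ ≤ c * ‖toLp 2 y‖ * ‖toLp 2 x‖) : ‖T‖ ≤ c := by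
  rw [l2_opNorm_def]
  refine ContinuousLinearMap.opNorm_le_bound _ hc fun x => ?_
  set v : EuclideanSpace ℂ m := toLp 2 (T *ᵥ ofLp x)
  have hv : ‖v‖ * ‖v‖ ≤ c * ‖x‖ * ‖v‖ := by
    calc ‖v‖ * ‖v‖ = ‖star (ofLp v) ⬝ᵥ T *ᵥ ofLp x‖ := by
          rw [dotProduct_comm, ← sq]
          change _ = ‖inner ℂ v v‖
          rw [inner_self_eq_norm_sq_to_K]; simp
      _ ≤ c * ‖v‖ * ‖x‖ := h (ofLp x) (ofLp v)
      _ = c * ‖x‖ * ‖v‖ := by ring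
  rcases (norm_nonneg v).eq_or_lt with h0 | hpos
  · change ‖v‖ ≤ c * ‖x‖
    rw [← h0]; positivity
  · exact le_of_mul_le_mul_right hv hpos

variable [DecidableEq l]

variable (l) in
def kroneckerOneStarAlgHom : Matrix n n ℂ →⋆ₐ[ℂ] Matrix (n × l) (n × l) ℂ where
  toFun S := S ⊗ₖ 1
  map_one' := one_kronecker_one
  map_mul' S T := by rw [← mul_kronecker_mul, one_mul]
  map_zero' := zero_kronecker _
  map_add' S T := add_kronecker _ _ _
  commutes' c := by
    simp only [Algebra.algebraMap_eq_smul_one, smul_kronecker, one_kronecker_one]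
  map_star' S := by
    simp only [star_eq_conjTranspose, conjTranspose_kronecker, conjTranspose_one]

lemma l2_opNorm_kronecker_one_le (V : Matrix m n ℂ) :
    ‖V ⊗ₖ (1 : Matrix l l ℂ)‖ ≤ ‖V‖ := by
  -- By the C*-identity it is enough to bound `(Vᴴ * V) ⊗ₖ 1`, the image of `Vᴴ * V` under a
  -- star homomorphism of C*-algebras, which is contractive.
  have hsq : ‖V ⊗ₖ (1 : Matrix l l ℂ)‖ * ‖V ⊗ₖ (1 : Matrix l l ℂ)‖ ≤ ‖V‖ * ‖V‖ := by
    rw [← l2_opNorm_conjTranspose_mul_self, ← l2_opNorm_conjTranspose_mul_self,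
      conjTranspose_kronecker, conjTranspose_one, ← mul_kronecker_mul, one_mul]
    exact NonUnitalStarAlgHom.norm_apply_le (kroneckerOneStarAlgHom l) (Vᴴ * V)
  exact mul_self_le_mul_self_iff (norm_nonneg _) (norm_nonneg _) |>.mpr hsq

lemma l2_opNorm_conjTranspose_kronecker_one_mul_mul_le {m' l' : Type*} [DecidableEq m]
    [Fintype m'] [DecidableEq m'] [Fintype l'] [DecidableEq l'] {W : Matrix m l ℂ}
    {V : Matrix m' l' ℂ} (hW : ‖W‖ ≤ 1) (hV : ‖V‖ ≤ 1) (X : Matrix (m × n) (m' × n) ℂ) :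
    ‖(W ⊗ₖ (1 : Matrix n n ℂ))ᴴ * X * (V ⊗ₖ (1 : Matrix n n ℂ))‖ ≤ ‖X‖ := by
  calc ‖(W ⊗ₖ (1 : Matrix n n ℂ))ᴴ * X * (V ⊗ₖ (1 : Matrix n n ℂ))‖
      ≤ ‖W ⊗ₖ (1 : Matrix n n ℂ)‖ * ‖X‖ * ‖V ⊗ₖ (1 : Matrix n n ℂ)‖ := by
        grw [l2_opNorm_mul, l2_opNorm_mul, l2_opNorm_conjTranspose]
    _ ≤ 1 * ‖X‖ * 1 := by
        grw [l2_opNorm_kronecker_one_le, l2_opNorm_kronecker_one_le, hW, hV]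
    _ = ‖X‖ := by ring

end L2OpNorm

section Polar

variable {m n : Type*} [Fintype m] [Fintype n] [DecidableEq n]

lemma exists_unitary_conjTranspose_mul_self_eq_diagonal (A : Matrix m n ℂ) :
    ∃ (Q : Matrix n n ℂ) (s : n → ℝ), Qᴴ * Q = 1 ∧ Q * Qᴴ = 1 ∧
      (A * Q)ᴴ * (A * Q) = diagonal fun i => (s i : ℂ) ^ 2 := by
  have hA := isHermitian_conjTranspose_mul_self A
  have heig := (posSemidef_conjTranspose_mul_self A).eigenvalues_nonneg
  set Q : Matrix n n ℂ := (hA.eigenvectorUnitary : Matrix n n ℂ)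
  have hQ : Qᴴ * Q = 1 := Unitary.coe_star_mul_self _
  refine ⟨Q, fun i => √(hA.eigenvalues i), hQ, Unitary.coe_mul_star_self _, ?_⟩
  have hdiag : Qᴴ * (Aᴴ * A) * Q = diagonal (RCLike.ofReal ∘ hA.eigenvalues) := by
    conv_lhs => rw [hA.spectral_theorem, Unitary.conjStarAlgAut_apply]
    change Qᴴ * (Q * _ * Qᴴ) * Q = _
    rw [Matrix.mul_assoc, Matrix.mul_assoc, Matrix.mul_assoc, hQ, Matrix.mul_one,
      ← Matrix.mul_assoc, hQ, Matrix.one_mul]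
  calc (A * Q)ᴴ * (A * Q) = Qᴴ * (Aᴴ * A) * Q := by
        simp only [conjTranspose_mul, Matrix.mul_assoc]
    _ = _ := by
        rw [hdiag]
        congr 1 with i
        rw [Function.comp_apply, ← Complex.ofReal_pow, Real.sq_sqrt (heig i)]
        rfl

lemma mul_diagonal_inv_mul_self_of_conjTranspose_mul_self {P : Matrix m n ℂ} {d : n → ℂ}
    (hP : Pᴴ * P = diagonal fun i => d i ^ 2) :
    P * diagonal (fun i => (d i)⁻¹ * d i) = P := by
  set e : n → ℂ := fun i => (d i)⁻¹ * d i - 1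
  have hed : ∀ i, e i * d i = 0 := fun i => by
    rw [sub_mul, inv_mul_mul_self, one_mul, sub_self]
  have hPe : P * diagonal e = 0 := by
    rw [← conjTranspose_mul_self_eq_zero, conjTranspose_mul, diagonal_conjTranspose,
      Matrix.mul_assoc, ← Matrix.mul_assoc Pᴴ, hP, diagonal_mul_diagonal, diagonal_mul_diagonal,
      ← diagonal_zero]
    congr 1 with i
    linear_combination (star (e i) * d i) * hed i
  calc P * diagonal (fun i => (d i)⁻¹ * d i) = P * diagonal e + P * (1 : Matrix n n ℂ) := by
        rw [← Matrix.mul_add, ← diagonal_one, diagonal_add]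
        simp [e]
    _ = P := by rw [hPe, zero_add, Matrix.mul_one]

lemma exists_eq_mul_l2_opNorm_le_one (A : Matrix m n ℂ) :
    ∃ (V : Matrix m n ℂ) (B : Matrix n n ℂ), A = V * B ∧ ‖V‖ ≤ 1 ∧ Bᴴ * B = Aᴴ * A := by
  obtain ⟨Q, s, hQ, hQ', hAQ⟩ := exists_unitary_conjTranspose_mul_self_eq_diagonal A
  set d : n → ℂ := fun i => (s i : ℂ)
  have hd : star d = d := funext fun i => Complex.conj_ofReal _
  -- `(d i)⁻¹ = 0` where `d i = 0`; the corresponding columns of `A * Q` vanish, so `A = V * B`.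
  set V := A * Q * diagonal fun i => (d i)⁻¹
  refine ⟨V, diagonal d * Qᴴ, ?_, ?_, ?_⟩
  · calc A = A * Q * diagonal (fun i => (d i)⁻¹ * d i) * Qᴴ := by
          rw [mul_diagonal_inv_mul_self_of_conjTranspose_mul_self hAQ, Matrix.mul_assoc, hQ',
            Matrix.mul_one]
      _ = V * (diagonal d * Qᴴ) := by
          rw [← diagonal_mul_diagonal]
          simp only [V, Matrix.mul_assoc]
  · have hV : Vᴴ * V = diagonal fun i => ((d i)⁻¹ * d i) ^ 2 := by
      rw [conjTranspose_mul, Matrix.mul_assoc, ← Matrix.mul_assoc (A * Q)ᴴ, hAQ,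
        diagonal_conjTranspose, diagonal_mul_diagonal, diagonal_mul_diagonal]
      congr 1 with i
      simp only [Pi.star_apply, star_inv₀, Complex.star_def, Complex.conj_ofReal, d]
      ring
    have hnorm : ‖Vᴴ * V‖ ≤ 1 := by
      rw [hV, l2_opNorm_diagonal, pi_norm_le_iff_of_nonneg zero_le_one]
      intro i
      rcases eq_or_ne (d i) 0 with h | h <;> simp [h]
    rw [l2_opNorm_conjTranspose_mul_self] at hnorm
    nlinarith [norm_nonneg V]
  · calc (diagonal d * Qᴴ)ᴴ * (diagonal d * Qᴴ) = Q * (diagonal fun i => d i ^ 2) * Qᴴ := by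
          rw [conjTranspose_mul, conjTranspose_conjTranspose, diagonal_conjTranspose, hd,
            Matrix.mul_assoc, ← Matrix.mul_assoc (diagonal d), diagonal_mul_diagonal,
            ← Matrix.mul_assoc]
          simp only [sq]
      _ = Aᴴ * A := by
          rw [← hAQ, conjTranspose_mul]
          simp only [← Matrix.mul_assoc, hQ', Matrix.one_mul]
          simp only [Matrix.mul_assoc, hQ', Matrix.mul_one]

end Polar

section KroneckerOne

variable {R : Type*} [CommSemiring R] {ι ι' κ κ' α β : Type*} [Fintype α]

lemma kronecker_one_mulVec_uncurry [Fintype κ] [DecidableEq α] (V : Matrix ι κ R)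
    (B : Matrix κ α R) :
    (V ⊗ₖ (1 : Matrix α α R)) *ᵥ Function.uncurry B = Function.uncurry (V * B) := by
  ext ⟨i, a⟩
  simp [mulVec, dotProduct, Fintype.sum_prod_type, one_apply]
  rfl

lemma star_uncurry_dotProduct_uncurry [StarRing R] [Fintype ι] (A B : Matrix ι α R) :
    star (Function.uncurry A) ⬝ᵥ Function.uncurry B = trace (Aᴴ * B) := by
  simp only [dotProduct, trace, diag, mul_apply, Fintype.sum_prod_type, Pi.star_apply,
    conjTranspose_apply]
  exact Finset.sum_comm

lemma comp_symm_conjTranspose_kronecker_one_mul_mul_apply [StarRing R] [Fintype ι]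
    [Fintype ι'] [Fintype β] [DecidableEq α] [DecidableEq β] (X : Matrix (ι × α) (ι' × β) R)
    (W : Matrix ι κ R) (V : Matrix ι' κ' R) (i : κ) (j : κ') :
    (comp κ κ' α β R).symm ((W ⊗ₖ (1 : Matrix α α R))ᴴ * X * (V ⊗ₖ (1 : Matrix β β R))) i j
      = ∑ p, ∑ q, (star (W p i) * V q j) • (comp ι ι' α β R).symm X p q := by
  ext a b
  simp only [comp_symm_apply, mul_apply, Fintype.sum_prod_type, one_apply, conjTranspose_apply,
    kroneckerMap_apply, apply_ite (star : R → R), star_zero, mul_ite, ite_mul, mul_one, mul_zero,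
    zero_mul, Finset.sum_ite_eq', Finset.mem_univ, if_true, Finset.sum_mul, Matrix.sum_apply,
    smul_apply, smul_eq_mul]
  rw [Finset.sum_comm]
  exact Finset.sum_congr rfl fun _ _ => Finset.sum_congr rfl fun _ _ => by ring

lemma star_mulVec_dotProduct_mulVec_mulVec [StarRing R] [Fintype ι] [Fintype κ]
    (W : Matrix ι κ R) (T : Matrix ι ι R) (V : Matrix ι α R) (g : κ → R) (b : α → R) :
    star (W *ᵥ g) ⬝ᵥ T *ᵥ (V *ᵥ b) = star g ⬝ᵥ (Wᴴ * T * V) *ᵥ b := by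
  rw [star_mulVec, ← dotProduct_mulVec, mulVec_mulVec, mulVec_mulVec, Matrix.mul_assoc]

end KroneckerOne

variable {l m n : Type*} [Fintype l] [Fintype m] [Fintype n]

lemma norm_toLp_uncurry_sq (C : Matrix m n ℂ) :
    ‖toLp 2 (Function.uncurry C)‖ ^ 2 = (trace (Cᴴ * C)).re := by
  rw [← star_uncurry_dotProduct_uncurry, dotProduct_comm, @norm_sq_eq_re_inner ℂ]
  rfl

lemma norm_toLp_uncurry_eq_of_conjTranspose_mul_self_eq {A : Matrix l n ℂ} {B : Matrix m n ℂ}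
    (h : Bᴴ * B = Aᴴ * A) : ‖toLp 2 (Function.uncurry B)‖ = ‖toLp 2 (Function.uncurry A)‖ := by
  rw [← pow_left_inj₀ (norm_nonneg _) (norm_nonneg _) two_ne_zero, norm_toLp_uncurry_sq,
    norm_toLp_uncurry_sq, h]

lemma exists_eq_kronecker_one_mulVec_uncurry [DecidableEq n] (x : m × n → ℂ) :
    ∃ (V : Matrix m n ℂ) (B : Matrix n n ℂ), ‖V‖ ≤ 1 ∧
      x = (V ⊗ₖ (1 : Matrix n n ℂ)) *ᵥ Function.uncurry B ∧
      ‖toLp 2 (Function.uncurry B)‖ = ‖toLp 2 x‖ := by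
  obtain ⟨V, B, hVB, hV, hB⟩ := exists_eq_mul_l2_opNorm_le_one (of (Function.curry x))
  have hx : Function.uncurry (of (Function.curry x)) = x := Function.uncurry_curry x
  refine ⟨V, B, hV, ?_, ?_⟩
  · rw [kronecker_one_mulVec_uncurry, ← hVB, hx]
  · rw [norm_toLp_uncurry_eq_of_conjTranspose_mul_self_eq hB, hx]

end Matrix

lemma ampl_conjTranspose_kronecker_one_mul_mul {n k m l : ℕ}
    (φ : Matrix (Fin n) (Fin n) ℂ →ₗ[ℂ] Matrix (Fin k) (Fin k) ℂ)
    (X : Matrix (Fin m × Fin n) (Fin m × Fin n) ℂ) (W V : Matrix (Fin m) (Fin l) ℂ) :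
    ampl l φ
        ((W ⊗ₖ (1 : Matrix (Fin n) (Fin n) ℂ))ᴴ * X * (V ⊗ₖ (1 : Matrix (Fin n) (Fin n) ℂ)))
      = (W ⊗ₖ (1 : Matrix (Fin k) (Fin k) ℂ))ᴴ * ampl m φ X *
          (V ⊗ₖ (1 : Matrix (Fin k) (Fin k) ℂ)) := by
  ext ⟨i, a⟩ ⟨j, b⟩
  change φ ((comp (Fin l) (Fin l) (Fin n) (Fin n) ℂ).symm
    ((W ⊗ₖ (1 : Matrix (Fin n) (Fin n) ℂ))ᴴ * X * (V ⊗ₖ (1 : Matrix (Fin n) (Fin n) ℂ))) i j)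
      a b = _
  rw [comp_symm_conjTranspose_kronecker_one_mul_mul_apply]
  simp only [map_sum, map_smul]
  -- The blocks of `ampl m φ X` are the images under `φ` of the blocks of `X`.
  exact (congrFun (congrFun
    (comp_symm_conjTranspose_kronecker_one_mul_mul_apply (ampl m φ X) W V i j) a) b).symm

lemma mapNorm_ampl_le {n k : ℕ} (φ : Matrix (Fin n) (Fin n) ℂ →ₗ[ℂ] Matrix (Fin k) (Fin k) ℂ)
    (m : ℕ) : mapNorm (ampl m φ) ≤ mapNorm (ampl k φ) := by
  rw [mapNorm_eq_norm_toContinuousLinearMap, mapNorm_eq_norm_toContinuousLinearMap]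
  set Φ := LinearMap.toContinuousLinearMap (ampl k φ)
  refine ContinuousLinearMap.opNorm_le_bound _ (norm_nonneg _) fun X => ?_
  refine l2_opNorm_le_of_norm_star_dotProduct_mulVec_le (by positivity) fun x y => ?_
  obtain ⟨V, B, hV, rfl, hB⟩ := exists_eq_kronecker_one_mulVec_uncurry x
  obtain ⟨W, G, hW, rfl, hG⟩ := exists_eq_kronecker_one_mulVec_uncurry y
  set Y := (W ⊗ₖ (1 : Matrix (Fin n) (Fin n) ℂ))ᴴ * X *
    (V ⊗ₖ (1 : Matrix (Fin n) (Fin n) ℂ))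
  have hΦ : Φ Y = (W ⊗ₖ (1 : Matrix (Fin k) (Fin k) ℂ))ᴴ * ampl m φ X * (V ⊗ₖ 1) :=
    ampl_conjTranspose_kronecker_one_mul_mul φ X W V
  calc _ = ‖star (Function.uncurry G) ⬝ᵥ Φ Y *ᵥ Function.uncurry B‖ := by
        rw [star_mulVec_dotProduct_mulVec_mulVec, hΦ]
        rfl
    _ ≤ ‖Φ Y‖ * ‖toLp 2 (Function.uncurry G)‖ * ‖toLp 2 (Function.uncurry B)‖ :=
        norm_star_dotProduct_mulVec_le _ _ _
    _ ≤ _ := by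
        rw [hG, hB]
        gcongr
        exact Φ.le_opNorm_of_le (l2_opNorm_conjTranspose_kronecker_one_mul_mul_le hW hV X)

/-- Smith's stabilization: `‖φ‖_cb = ‖id_k ⊗ φ‖` for `φ : M_n → M_k`. -/
theorem cbNorm_eq_mapNorm_ampl_k {n k : ℕ}
    (φ : Matrix (Fin n) (Fin n) ℂ →ₗ[ℂ] Matrix (Fin k) (Fin k) ℂ) :
    cbNorm φ = mapNorm (ampl k φ) := by
  have hle (m : ℕ) : mapNorm (ampl m φ) ≤ mapNorm (ampl k φ) := mapNorm_ampl_le φ m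
  refine le_antisymm (Real.iSup_le (fun m => hle (m + 1)) (mapNorm_nonneg _)) ?_
  cases k with
  | zero => rw [mapNorm_of_isEmpty]; exact Real.iSup_nonneg fun m => mapNorm_nonneg _
  | succ k => exact le_ciSup ⟨_, Set.forall_mem_range.2 fun m => hle (m + 1)⟩ k
end
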